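/- Work in ℝ^4. Set σ = ∑_{1≤i<j≤4} ((ε_i − ε_j) + (ε_i + ε_j)) (the sum of the twelve long positive roots of F_4) and τ = ε_1 + ε_2 + ε_3 + ε_4 + ∑_{(s_2,s_3,s_4)∈{±1}^3} (ε_1 + s_2·ε_2 + s_3·ε_3 + s_4·ε_4)/2 (the sum of the twelve short positive roots of F_4), and let Ψ = {ε_1, ε_1 + ε_2, ε_2 + ε_3, ε_3 + ε_4}. Then: (a) σ = 2(3ε_1 + 2ε_2 + ε_3) = 2(ε_1 + ε_2) + 2(ε_2 + ε_3) + 4ε_1; (b) τ = 5ε_1 + ε_2 + ε_3 + ε_4 = (ε_1 + ε_2) + (ε_3 + ε_4) + 4ε_1; consequently, for every real c > 0 there exist m_β > 0 (β ∈ Ψ) with σ + c·τ = ∑_{β∈Ψ} m_β·β; (c) Ψ spans ℝ^4 and every element of Ψ lies in Φ(F_4); (d) for all β, β′ ∈ Ψ (including β = β′), β + β′ ∉ Φ(F_4). -/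

import Mathlib

/-- `eps l i` is the standard basis vector of `ℝ^l` with `1`-based index `i`. -/
def eps (l : ℕ) (i : ℕ) : Fin l → ℝ := fun j => if (j : ℕ) + 1 = i then 1 else 0

/-- The root system `Φ(F_4)` in `ℝ^4`: the vectors `±ε_i` (`1 ≤ i ≤ 4`),
`±ε_i ± ε_j` (`1 ≤ i < j ≤ 4`), and `(±ε_1 ± ε_2 ± ε_3 ± ε_4)/2`. -/
def PhiF4 : Set (Fin 4 → ℝ) :=
  {v | ∃ i, 1 ≤ i ∧ i ≤ 4 ∧ (v = eps 4 i ∨ v = -eps 4 i)} ∪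
  {v | ∃ i j, 1 ≤ i ∧ i < j ∧ j ≤ 4 ∧
      (v = eps 4 i + eps 4 j ∨ v = eps 4 i - eps 4 j ∨
       v = -eps 4 i + eps 4 j ∨ v = -eps 4 i - eps 4 j)} ∪
  {v | ∃ ν : Fin 4 → Bool,
      v = ((1 : ℝ) / 2) • ∑ i : Fin 4, (if ν i then (-1 : ℝ) else 1) • eps 4 ((i : ℕ) + 1)}

/-- `σ`: the sum of the twelve long positive roots of `F_4`. -/
noncomputable def sigmaF4 : Fin 4 → ℝ :=
  ∑ i ∈ Finset.Icc 1 4, ∑ j ∈ Finset.Icc (i + 1) 4,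
    ((eps 4 i - eps 4 j) + (eps 4 i + eps 4 j))

/-- `τ`: the sum of the twelve short positive roots of `F_4`, namely
`ε_1 + ε_2 + ε_3 + ε_4 + ∑_{(s_2,s_3,s_4) ∈ {±1}³} (ε_1 + s_2 ε_2 + s_3 ε_3 + s_4 ε_4)/2`. -/
noncomputable def tauF4 : Fin 4 → ℝ :=
  (eps 4 1 + eps 4 2 + eps 4 3 + eps 4 4) +
    ∑ s : Fin 3 → Bool, ((1 : ℝ) / 2) •
      (eps 4 1 + (if s 0 then (-1 : ℝ) else 1) • eps 4 2
        + (if s 1 then (-1 : ℝ) else 1) • eps 4 3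
        + (if s 2 then (-1 : ℝ) else 1) • eps 4 4)

/-- `Ψ = {ε_1, ε_1 + ε_2, ε_2 + ε_3, ε_3 + ε_4}`. -/
noncomputable def PsiF4 : Finset (Fin 4 → ℝ) :=
  {eps 4 1, eps 4 1 + eps 4 2, eps 4 2 + eps 4 3, eps 4 3 + eps 4 4}


lemma finval0 : ((0:Fin 4):ℕ) = 0 := rfl
lemma finval1 : ((1:Fin 4):ℕ) = 1 := rfl
lemma finval2 : ((2:Fin 4):ℕ) = 2 := rfl
lemma finval3 : ((3:Fin 4):ℕ) = 3 := rfl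

def boolEquiv3 : (Fin 3 → Bool) ≃ Bool × Bool × Bool where
  toFun s := (s 0, s 1, s 2)
  invFun p := ![p.1, p.2.1, p.2.2]
  left_inv s := by funext i; fin_cases i <;> simp
  right_inv p := rfl

lemma sum_pi3 {M : Type*} [AddCommMonoid M] (f : (Fin 3 → Bool) → M) :
    ∑ s : Fin 3 → Bool, f s = ∑ p : Bool × Bool × Bool, f ![p.1, p.2.1, p.2.2] := by
  refine Fintype.sum_equiv boolEquiv3 _ _ fun s => ?_
  congr 1
  funext i; fin_cases i <;> rfl

lemma normsq_mem (v : Fin 4 → ℝ) (hv : v ∈ PhiF4) :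
    (∑ j, v j ^ 2) = 1 ∨ (∑ j, v j ^ 2) = 2 := by
  rcases hv with (⟨i, hi1, hi4, h | h⟩ | ⟨i, j, hi1, hij, hj4, h | h | h | h⟩) | ⟨ν, h⟩ <;>
      subst h <;> simp only [Fin.sum_univ_four]
  · left; interval_cases i <;> norm_num [eps, finval0, finval1, finval2, finval3]
  · left; interval_cases i <;> norm_num [eps, finval0, finval1, finval2, finval3]
  · right
    have hi4' : i ≤ 4 := le_trans (le_of_lt hij) hj4
    interval_cases i <;> interval_cases j <;> norm_num [eps, finval0, finval1, finval2, finval3]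
  · right
    have hi4' : i ≤ 4 := le_trans (le_of_lt hij) hj4
    interval_cases i <;> interval_cases j <;> norm_num [eps, finval0, finval1, finval2, finval3]
  · right
    have hi4' : i ≤ 4 := le_trans (le_of_lt hij) hj4
    interval_cases i <;> interval_cases j <;> norm_num [eps, finval0, finval1, finval2, finval3]
  · right
    have hi4' : i ≤ 4 := le_trans (le_of_lt hij) hj4
    interval_cases i <;> interval_cases j <;> norm_num [eps, finval0, finval1, finval2, finval3]
  · left
    cases hν0 : ν 0 <;> cases hν1 : ν 1 <;> cases hν2 : ν 2 <;> cases hν3 : ν 3 <;>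
      norm_num [Fin.sum_univ_four, eps, finval0, finval1, finval2, finval3, hν0, hν1, hν2, hν3]

lemma sigma_eq2 : sigmaF4 = (2 : ℝ) • (eps 4 1 + eps 4 2) + (2 : ℝ) • (eps 4 2 + eps 4 3)
    + (4 : ℝ) • eps 4 1 := by
  funext j
  simp only [sigmaF4, show (Finset.Icc 1 4 : Finset ℕ) = {1,2,3,4} from rfl]
  fin_cases j <;> norm_num [Finset.sum_insert, Finset.sum_apply, eps]

lemma sigma_eq1 : sigmaF4 = (2 : ℝ) • ((3 : ℝ) • eps 4 1 + (2 : ℝ) • eps 4 2 + eps 4 3) := by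
  rw [sigma_eq2]; funext j; fin_cases j <;> norm_num [eps]

lemma tau_eq2 : tauF4 = (eps 4 1 + eps 4 2) + (eps 4 3 + eps 4 4) + (4 : ℝ) • eps 4 1 := by
  rw [tauF4, sum_pi3]
  funext j
  fin_cases j <;> norm_num [Fintype.sum_prod_type, Finset.sum_apply, eps, Matrix.cons_val_two, Matrix.cons_val_one, Matrix.cons_val_zero, Matrix.tail_cons, Matrix.head_cons]

lemma tau_eq1 : tauF4 = (5 : ℝ) • eps 4 1 + eps 4 2 + eps 4 3 + eps 4 4 := by
  rw [tau_eq2]; funext j; fin_cases j <;> norm_num [eps]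

lemma ne12 : eps 4 1 ≠ eps 4 1 + eps 4 2 := fun h => by
  have := congrFun h 1; norm_num [eps, finval1] at this
lemma ne13 : eps 4 1 ≠ eps 4 2 + eps 4 3 := fun h => by
  have := congrFun h 0; norm_num [eps, finval0] at this
lemma ne14 : eps 4 1 ≠ eps 4 3 + eps 4 4 := fun h => by
  have := congrFun h 0; norm_num [eps, finval0] at this
lemma ne23 : eps 4 1 + eps 4 2 ≠ eps 4 2 + eps 4 3 := fun h => by
  have := congrFun h 0; norm_num [eps, finval0] at this
lemma ne24 : eps 4 1 + eps 4 2 ≠ eps 4 3 + eps 4 4 := fun h => by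
  have := congrFun h 0; norm_num [eps, finval0] at this
lemma ne34 : eps 4 2 + eps 4 3 ≠ eps 4 3 + eps 4 4 := fun h => by
  have := congrFun h 1; norm_num [eps, finval1] at this

theorem stmt_10 :
    ((sigmaF4 = (2 : ℝ) • ((3 : ℝ) • eps 4 1 + (2 : ℝ) • eps 4 2 + eps 4 3) ∧
        sigmaF4 = (2 : ℝ) • (eps 4 1 + eps 4 2) + (2 : ℝ) • (eps 4 2 + eps 4 3)
          + (4 : ℝ) • eps 4 1) ∧
      (tauF4 = (5 : ℝ) • eps 4 1 + eps 4 2 + eps 4 3 + eps 4 4 ∧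
        tauF4 = (eps 4 1 + eps 4 2) + (eps 4 3 + eps 4 4) + (4 : ℝ) • eps 4 1) ∧
      (∀ c : ℝ, 0 < c → ∃ m : (Fin 4 → ℝ) → ℝ, (∀ β ∈ PsiF4, 0 < m β) ∧
        sigmaF4 + c • tauF4 = ∑ β ∈ PsiF4, m β • β)) ∧
    (Submodule.span ℝ (PsiF4 : Set (Fin 4 → ℝ)) = ⊤ ∧ ∀ β ∈ PsiF4, β ∈ PhiF4) ∧
    (∀ β ∈ PsiF4, ∀ β' ∈ PsiF4, β + β' ∉ PhiF4) := by
  classical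
  refine ⟨⟨⟨sigma_eq1, sigma_eq2⟩, ⟨tau_eq1, tau_eq2⟩, ?_⟩, ⟨?_, ?_⟩, ?_⟩
  · -- existence of positive coefficients
    intro c hc
    refine ⟨fun v => if v = eps 4 1 then 4 + 4*c else if v = eps 4 1 + eps 4 2 then 2 + c
      else if v = eps 4 2 + eps 4 3 then 2 else c, ?_, ?_⟩
    · intro β hβ
      simp only [PsiF4, Finset.mem_insert, Finset.mem_singleton] at hβ
      rcases hβ with rfl | rfl | rfl | rfl <;> beta_reduce
      · rw [if_pos rfl]; linarith
      · rw [if_neg (Ne.symm ne12), if_pos rfl]; linarith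
      · rw [if_neg (Ne.symm ne13), if_neg (Ne.symm ne23), if_pos rfl]; norm_num
      · rw [if_neg (Ne.symm ne14), if_neg (Ne.symm ne24), if_neg (Ne.symm ne34)]; exact hc
    · have hexp : ∀ m : (Fin 4 → ℝ) → ℝ, ∑ β ∈ PsiF4, m β • β =
          m (eps 4 1) • eps 4 1 + (m (eps 4 1 + eps 4 2) • (eps 4 1 + eps 4 2)
            + (m (eps 4 2 + eps 4 3) • (eps 4 2 + eps 4 3)
              + m (eps 4 3 + eps 4 4) • (eps 4 3 + eps 4 4))) := by
        intro m
        rw [PsiF4, Finset.sum_insert, Finset.sum_insert, Finset.sum_insert,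
          Finset.sum_singleton]
        · simp only [Finset.mem_singleton]; exact ne34
        · simp only [Finset.mem_insert, Finset.mem_singleton]; push_neg
          exact ⟨ne23, ne24⟩
        · simp only [Finset.mem_insert, Finset.mem_singleton]; push_neg
          exact ⟨ne12, ne13, ne14⟩
      rw [hexp]
      rw [if_pos rfl, if_neg (Ne.symm ne12), if_pos rfl, if_neg (Ne.symm ne13),
        if_neg (Ne.symm ne23), if_pos rfl, if_neg (Ne.symm ne14), if_neg (Ne.symm ne24),
        if_neg (Ne.symm ne34), sigma_eq2, tau_eq2]
      funext j
      fin_cases j <;> simp [eps, finval0, finval1, finval2, finval3] <;> ring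
  · -- span
    have h1 : eps 4 1 ∈ Submodule.span ℝ (PsiF4 : Set (Fin 4 → ℝ)) :=
      Submodule.subset_span (by simp [PsiF4])
    have h12 : eps 4 1 + eps 4 2 ∈ Submodule.span ℝ (PsiF4 : Set (Fin 4 → ℝ)) :=
      Submodule.subset_span (by simp [PsiF4])
    have h23 : eps 4 2 + eps 4 3 ∈ Submodule.span ℝ (PsiF4 : Set (Fin 4 → ℝ)) :=
      Submodule.subset_span (by simp [PsiF4])
    have h34 : eps 4 3 + eps 4 4 ∈ Submodule.span ℝ (PsiF4 : Set (Fin 4 → ℝ)) :=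
      Submodule.subset_span (by simp [PsiF4])
    have h2 : eps 4 2 ∈ Submodule.span ℝ (PsiF4 : Set (Fin 4 → ℝ)) := by
      have := Submodule.sub_mem _ h12 h1
      rwa [add_sub_cancel_left] at this
    have h3 : eps 4 3 ∈ Submodule.span ℝ (PsiF4 : Set (Fin 4 → ℝ)) := by
      have := Submodule.sub_mem _ h23 h2
      rwa [add_sub_cancel_left] at this
    have h4 : eps 4 4 ∈ Submodule.span ℝ (PsiF4 : Set (Fin 4 → ℝ)) := by
      have := Submodule.sub_mem _ h34 h3
      rwa [add_sub_cancel_left] at this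
    rw [eq_top_iff]
    rintro v -
    have hv : v = v 0 • eps 4 1 + v 1 • eps 4 2 + v 2 • eps 4 3 + v 3 • eps 4 4 := by
      funext j; fin_cases j <;> norm_num [eps, finval0, finval1, finval2, finval3] <;> rfl
    rw [hv]
    exact Submodule.add_mem _ (Submodule.add_mem _ (Submodule.add_mem _
      (Submodule.smul_mem _ _ h1) (Submodule.smul_mem _ _ h2))
      (Submodule.smul_mem _ _ h3)) (Submodule.smul_mem _ _ h4)
  · -- Ψ ⊆ Φ
    intro β hβ
    simp only [PsiF4, Finset.mem_insert, Finset.mem_singleton] at hβ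
    rcases hβ with rfl | rfl | rfl | rfl
    · exact Or.inl (Or.inl ⟨1, le_refl 1, by norm_num, Or.inl rfl⟩)
    · exact Or.inl (Or.inr ⟨1, 2, le_refl 1, by norm_num, by norm_num, Or.inl rfl⟩)
    · exact Or.inl (Or.inr ⟨2, 3, by norm_num, by norm_num, by norm_num, Or.inl rfl⟩)
    · exact Or.inl (Or.inr ⟨3, 4, by norm_num, by norm_num, by norm_num, Or.inl rfl⟩)
  · -- sums not in Φ
    intro β hβ β' hβ' h
    simp only [PsiF4, Finset.mem_insert, Finset.mem_singleton] at hβ hβ'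
    have key := normsq_mem _ h
    rcases hβ with rfl | rfl | rfl | rfl <;> rcases hβ' with rfl | rfl | rfl | rfl <;>
      norm_num [Fin.sum_univ_four, eps, finval0, finval1, finval2, finval3,
        show (2 : Fin 4) ≠ 0 from by decide, show (3 : Fin 4) ≠ 0 from by decide] at key
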